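/- Let m ≥ 2 and H ≥ m be integers. Let μ⁴ be the product Haar probability measure on ℤ_[2]⁴ with coordinates (x, y, z, w), and set ξ = (x−w)² + 4yz. Then: (1) for each c ∈ {1, 5}, μ⁴{(x,y,z,w) : y is a unit, and ξ = 2^{2(H−m)}·u for some unit u with 8 ∣ u − c} = (1/2)·4^{-(H−m+1)}; (2) μ⁴{(x,y,z,w) : y is a unit, and ξ = 2^{2(H−m)+2}·u for some unit u with 4 ∣ u − 3} = (1/4)·4^{-(H−m+1)}; (3) μ⁴{(x,y,z,w) : y is a unit, and ξ = 2^{2(H−m)+3}·u for some unit u} = (1/4)·4^{-(H−m+1)}. (Conditioned on y being a unit, these say: for i ∈ {1,5} the probability that sqf(ξ) ≡ i (mod 8) and H_M = H is 4^{-(H−(m−1))}, and for the classes sqf(ξ) ≡ 3 (mod 4) and sqf(ξ) ≡ 2 (mod 4) it is (1/2)·4^{-(H−(m−1))}; this is Theorem 6.1.) -/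

import Mathlib

/-!
Write `ξ = (x - w)² + 4yz`, the discriminant of the characteristic polynomial of `(x y; z w)`.
Each event says that `y` is a unit and `ξ ≡ a (mod 2ⁿ)` for a suitable `a` that is a square
mod 4. Integrate over `z` first: for a unit `y`, `z ↦ 4yz` is a bijection onto `4ℤ₂`, so the
`z`-measure is `2^{-(n-2)}` when `4 ∣ a - (x - w)²` and `0` otherwise. Since `a` is a square mod 4,
that condition fixes the parity of `x - w`, which has probability `1/2`, and `y` is a unit with
probability `1/2`. All measures reduce to those of the cosets of `pⁿℤ_p`, the kernel of
`ℤ_p → ℤ/pⁿ`, a subgroup of index `pⁿ`.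
-/

open MeasureTheory
open scoped ENNReal

noncomputable instance : MeasurableSpace ℤ_[2] := borel ℤ_[2]
instance : BorelSpace ℤ_[2] := ⟨rfl⟩

theorem isClosed_setOf_dvd {R : Type*} [Monoid R] [TopologicalSpace R] [ContinuousMul R]
    [CompactSpace R] [T2Space R] (d : R) : IsClosed {x | d ∣ x} := by
  have h : {x | d ∣ x} = Set.range (d * ·) := by
    ext x
    exact ⟨fun ⟨c, hc⟩ => ⟨c, hc.symm⟩, fun ⟨c, hc⟩ => ⟨c, hc.symm⟩⟩
  rw [h]
  exact (isCompact_range (continuous_const_mul d)).isClosed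

namespace MeasureTheory.Measure

variable {α β : Type*} [MeasurableSpace α] [MeasurableSpace β]

theorem prod_apply_eq_mul_of_measure_prodMk_left (μ : Measure α) (ν : Measure β) [SFinite ν]
    {s : Set (α × β)} (hs : MeasurableSet s) {A : Set α} (hA : MeasurableSet A) {c : ℝ≥0∞}
    (h : ∀ x, ν (Prod.mk x ⁻¹' s) = A.indicator (fun _ => c) x) : μ.prod ν s = c * μ A := by
  rw [prod_apply hs, lintegral_congr h, lintegral_indicator_const hA]

theorem prod_apply_eq_mul_of_measure_prodMk_right (μ : Measure α) (ν : Measure β) [SFinite ν]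
    [SFinite μ] {s : Set (α × β)} (hs : MeasurableSet s) {B : Set β} (hB : MeasurableSet B)
    {c : ℝ≥0∞} (h : ∀ y, μ ((·, y) ⁻¹' s) = B.indicator (fun _ => c) y) :
    μ.prod ν s = c * ν B := by
  rw [prod_apply_symm hs, lintegral_congr h, lintegral_indicator_const hB]

end MeasureTheory.Measure

namespace PadicInt

section General

variable {p : ℕ} [Fact p.Prime]

theorem index_span_pow (n : ℕ) :
    (Ideal.span {(p : ℤ_[p]) ^ n}).toAddSubgroup.index = p ^ n := by
  rw [← ker_toZModPow]
  have := AddSubgroup.index_ker (toZModPow n : ℤ_[p] →+* ZMod (p ^ n)).toAddMonoidHom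
  rw [AddMonoidHom.range_eq_top.mpr (ZMod.ringHom_surjective _), AddSubgroup.card_top,
    Nat.card_zmod] at this
  exact this

theorem isUnit_iff_not_dvd (x : ℤ_[p]) : IsUnit x ↔ ¬(p : ℤ_[p]) ∣ x := by
  rw [← norm_lt_one_iff_dvd, ← not_isUnit_iff, not_not]

theorem isClosed_setOf_isUnit : IsClosed {x : ℤ_[p] | IsUnit x} := by
  simp_rw [isUnit_iff]
  exact isClosed_eq continuous_norm continuous_const

theorem exists_isUnit_eq_pow_mul_and_pow_dvd_sub_iff {c : ℤ_[p]} (hc : IsUnit c) {j : ℕ}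
    (hj : j ≠ 0) (e : ℕ) (ξ : ℤ_[p]) :
    (∃ u, IsUnit u ∧ ξ = (p : ℤ_[p]) ^ e * u ∧ (p : ℤ_[p]) ^ j ∣ u - c) ↔
      (p : ℤ_[p]) ^ (e + j) ∣ ξ - (p : ℤ_[p]) ^ e * c := by
  constructor
  · rintro ⟨u, -, rfl, hu⟩
    rw [← mul_sub, pow_add]
    exact mul_dvd_mul_left _ hu
  · rintro ⟨t, ht⟩
    have hp_dvd : (p : ℤ_[p]) ∣ (p : ℤ_[p]) ^ j * t := (dvd_pow_self _ hj).mul_right t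
    refine ⟨c + (p : ℤ_[p]) ^ j * t, ?_, by linear_combination ht, ⟨t, by ring⟩⟩
    rw [isUnit_iff_not_dvd] at hc ⊢
    exact fun h => hc ((dvd_add_left hp_dvd).mp h)

variable [MeasurableSpace ℤ_[p]] [BorelSpace ℤ_[p]] (μ : Measure ℤ_[p]) [μ.IsAddLeftInvariant]
  [IsProbabilityMeasure μ]

theorem measure_setOf_pow_dvd (n : ℕ) : μ {x | (p : ℤ_[p]) ^ n ∣ x} = (p : ℝ≥0∞)⁻¹ ^ n := by
  set I := (Ideal.span {(p : ℤ_[p]) ^ n}).toAddSubgroup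
  have hI : (I : Set ℤ_[p]) = {x | (p : ℤ_[p]) ^ n ∣ x} :=
    Set.ext fun _ => Ideal.mem_span_singleton
  have : I.FiniteIndex := ⟨by simp [I, index_span_pow, (Fact.out : p.Prime).ne_zero]⟩
  have h := I.index_mul_measure (hI ▸ (isClosed_setOf_dvd _).measurableSet) μ
  rw [index_span_pow, measure_univ, hI] at h
  rw [← ENNReal.inv_pow]
  exact ENNReal.eq_inv_of_mul_eq_one_left (by rw [mul_comm]; exact_mod_cast h)

theorem measure_setOf_pow_dvd_sub (n : ℕ) (c : ℤ_[p]) :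
    μ {x | (p : ℤ_[p]) ^ n ∣ x - c} = (p : ℝ≥0∞)⁻¹ ^ n := by
  rw [← measure_setOf_pow_dvd μ n, ← measure_preimage_add μ (-c) {x | (p : ℤ_[p]) ^ n ∣ x}]
  simp [neg_add_eq_sub]

theorem measure_setOf_isUnit : μ {x | IsUnit x} = 1 - (p : ℝ≥0∞)⁻¹ := by
  have h : {x : ℤ_[p] | IsUnit x} = {x | (p : ℤ_[p]) ^ 1 ∣ x}ᶜ := by
    ext x
    simp [isUnit_iff_not_dvd]
  rw [h, measure_compl (isClosed_setOf_dvd _).measurableSet (measure_ne_top μ _),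
    measure_univ, measure_setOf_pow_dvd, pow_one]

theorem measure_setOf_pow_dvd_pow_mul_sub {k n : ℕ} (hkn : k ≤ n) {y : ℤ_[p]} (hy : IsUnit y)
    (b : ℤ_[p]) :
    μ {z | (p : ℤ_[p]) ^ n ∣ (p : ℤ_[p]) ^ k * y * z - b} =
      {b | (p : ℤ_[p]) ^ k ∣ b}.indicator (fun _ => (p : ℝ≥0∞)⁻¹ ^ (n - k)) b := by
  by_cases hb : (p : ℤ_[p]) ^ k ∣ b
  · obtain ⟨b', rfl⟩ := hb
    rw [Set.indicator_of_mem (by exact dvd_mul_right _ _),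
      ← measure_setOf_pow_dvd_sub μ (n - k) (↑hy.unit⁻¹ * b')]
    congr 1
    ext z
    have hfactor : (p : ℤ_[p]) ^ k * y * z - (p : ℤ_[p]) ^ k * b' =
        (p : ℤ_[p]) ^ k * (y * (z - ↑hy.unit⁻¹ * b')) := by
      rw [mul_sub, ← mul_assoc y, IsUnit.mul_val_inv, one_mul]
      ring
    rw [Set.mem_ofPred_eq, Set.mem_ofPred_eq, hfactor, ← Nat.add_sub_cancel' hkn, pow_add,
      Nat.add_sub_cancel_left, mul_dvd_mul_iff_left (pow_ne_zero _ prime_p.ne_zero),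
      hy.dvd_mul_left]
  · rw [Set.indicator_of_notMem (by exact hb)]
    refine measure_eq_zero_iff_ae_notMem.mpr (Filter.Eventually.of_forall fun z hz => hb ?_)
    exact (dvd_sub_right (dvd_mul_of_dvd_left (dvd_mul_right _ _) _)).mp
      ((pow_dvd_pow _ hkn).trans hz)

end General

theorem two_dvd_or_two_dvd_sub_one (x : ℤ_[2]) : 2 ∣ x ∨ 2 ∣ x - 1 := by
  have h := sub_zmodRepr_mem x
  rw [maximalIdeal_eq_span_p, Ideal.mem_span_singleton] at h
  have hlt := zmodRepr_lt_p x
  interval_cases zmodRepr x <;> simp_all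

theorem not_two_dvd_one : ¬(2 : ℤ_[2]) ∣ 1 := by
  simpa using (isUnit_iff_not_dvd (1 : ℤ_[2])).mp isUnit_one

theorem isUnit_iff_two_dvd_sub_one (x : ℤ_[2]) : IsUnit x ↔ 2 ∣ x - 1 := by
  rw [isUnit_iff_not_dvd, Nat.cast_ofNat]
  exact ⟨(two_dvd_or_two_dvd_sub_one x).resolve_left,
    fun h h' => not_two_dvd_one ((dvd_sub_right h').mp h)⟩

theorem four_dvd_sq_iff (t : ℤ_[2]) : 4 ∣ t ^ 2 ↔ 2 ∣ t := by
  rw [show (4 : ℤ_[2]) = 2 ^ 2 by norm_num]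
  have h2 : Prime (2 : ℤ_[2]) := by simpa using prime_p (p := 2)
  exact ⟨fun h => h2.dvd_of_dvd_pow ((dvd_pow_self 2 two_ne_zero).trans h),
    fun ⟨s, hs⟩ => ⟨s ^ 2, by rw [hs]; ring⟩⟩

theorem four_dvd_sq_sub_one_of_two_dvd_sub_one {t : ℤ_[2]} (ht : 2 ∣ t - 1) : 4 ∣ t ^ 2 - 1 := by
  obtain ⟨s, hs⟩ := ht
  exact ⟨s + s ^ 2, by rw [eq_add_of_sub_eq hs]; ring⟩

theorem four_dvd_sub_sq_iff_of_four_dvd {a : ℤ_[2]} (ha : 4 ∣ a) (t : ℤ_[2]) :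
    4 ∣ a - t ^ 2 ↔ 2 ∣ t := by
  rw [dvd_sub_right ha, four_dvd_sq_iff]

theorem four_dvd_sub_sq_iff_of_four_dvd_sub_one {a : ℤ_[2]} (ha : 4 ∣ a - 1) (t : ℤ_[2]) :
    4 ∣ a - t ^ 2 ↔ 2 ∣ t - 1 := by
  rw [show a - t ^ 2 = (a - 1) - (t ^ 2 - 1) by ring, dvd_sub_right ha]
  refine ⟨fun h => (two_dvd_or_two_dvd_sub_one t).resolve_left fun ht => not_two_dvd_one ?_,
    four_dvd_sq_sub_one_of_two_dvd_sub_one⟩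
  exact dvd_trans ⟨2, by norm_num⟩ ((dvd_sub_right ((four_dvd_sq_iff t).mpr ht)).mp h)

variable (μ : Measure ℤ_[2]) [μ.IsAddLeftInvariant] [IsProbabilityMeasure μ]

theorem measure_setOf_four_dvd_sub_sq {a : ℤ_[2]} (ha : ∃ t, 4 ∣ a - t ^ 2) (x : ℤ_[2]) :
    μ {w | 4 ∣ a - (x - w) ^ 2} = 2⁻¹ := by
  obtain ⟨c, hc⟩ : ∃ c, ∀ w, 4 ∣ a - (x - w) ^ 2 ↔ 2 ∣ w - c := by
    obtain ⟨t, ht⟩ := ha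
    rcases two_dvd_or_two_dvd_sub_one t with ht2 | ht2
    · have ha4 : 4 ∣ a := (dvd_sub_left ((four_dvd_sq_iff t).mpr ht2)).mp ht
      exact ⟨x, fun w => by rw [four_dvd_sub_sq_iff_of_four_dvd ha4, dvd_sub_comm]⟩
    · have ha4 : 4 ∣ a - 1 := by
        simpa using dvd_add ht (four_dvd_sq_sub_one_of_two_dvd_sub_one ht2)
      refine ⟨x - 1, fun w => ?_⟩
      rw [four_dvd_sub_sq_iff_of_four_dvd_sub_one ha4, show x - w - 1 = -(w - (x - 1)) by ring,
        dvd_neg]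
  simp_rw [hc]
  simpa using measure_setOf_pow_dvd_sub μ (p := 2) 1 c

theorem measure_prod_setOf_pow_dvd_discr_sub {n : ℕ} (hn : 2 ≤ n) {a : ℤ_[2]}
    (ha : ∃ t, 4 ∣ a - t ^ 2) (x : ℤ_[2]) {y : ℤ_[2]} (hy : IsUnit y) :
    (μ.prod μ) {r : ℤ_[2] × ℤ_[2] | 2 ^ n ∣ (x - r.2) ^ 2 + 4 * y * r.1 - a} =
      2⁻¹ ^ (n - 2) * 2⁻¹ := by
  have hS : MeasurableSet {r : ℤ_[2] × ℤ_[2] | 2 ^ n ∣ (x - r.2) ^ 2 + 4 * y * r.1 - a} :=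
    ((isClosed_setOf_dvd _).preimage (by fun_prop)).measurableSet
  have hE : MeasurableSet {w : ℤ_[2] | 4 ∣ a - (x - w) ^ 2} :=
    ((isClosed_setOf_dvd _).preimage (by fun_prop)).measurableSet
  rw [Measure.prod_apply_eq_mul_of_measure_prodMk_right μ μ hS hE fun w => ?_,
    measure_setOf_four_dvd_sub_sq μ ha x]
  have hw : (·, w) ⁻¹' {r : ℤ_[2] × ℤ_[2] | 2 ^ n ∣ (x - r.2) ^ 2 + 4 * y * r.1 - a} =
      {z | ((2 : ℕ) : ℤ_[2]) ^ n ∣ ((2 : ℕ) : ℤ_[2]) ^ 2 * y * z - (a - (x - w) ^ 2)} := by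
    ext z
    simp only [Set.mem_preimage, Set.mem_ofPred_eq]
    ring_nf
  rw [hw, measure_setOf_pow_dvd_pow_mul_sub μ hn hy]
  simp only [Nat.cast_ofNat, show (2 : ℤ_[2]) ^ 2 = 4 by norm_num]
  rfl

theorem measure_setOf_isUnit_and_pow_dvd_discr_sub {n : ℕ} (hn : 2 ≤ n) {a : ℤ_[2]}
    (ha : ∃ t, 4 ∣ a - t ^ 2) :
    (μ.prod (μ.prod (μ.prod μ))) {q : ℤ_[2] × ℤ_[2] × ℤ_[2] × ℤ_[2] |
        IsUnit q.2.1 ∧ 2 ^ n ∣ (q.1 - q.2.2.2) ^ 2 + 4 * q.2.1 * q.2.2.1 - a} = 2⁻¹ ^ n := by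
  set S := {q : ℤ_[2] × ℤ_[2] × ℤ_[2] × ℤ_[2] |
    IsUnit q.2.1 ∧ 2 ^ n ∣ (q.1 - q.2.2.2) ^ 2 + 4 * q.2.1 * q.2.2.1 - a}
  have hS : MeasurableSet S :=
    ((isClosed_setOf_isUnit.preimage (by fun_prop)).inter
      ((isClosed_setOf_dvd _).preimage (by fun_prop))).measurableSet
  rw [Measure.prod_apply_eq_mul_of_measure_prodMk_left μ _ hS MeasurableSet.univ (c := 2⁻¹ ^ n)
    fun x => ?_, measure_univ, mul_one]
  rw [Set.indicator_univ,
    Measure.prod_apply_eq_mul_of_measure_prodMk_left μ _ (measurable_prodMk_left hS)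
      isClosed_setOf_isUnit.measurableSet (c := 2⁻¹ ^ (n - 2) * 2⁻¹) fun y => ?_,
    measure_setOf_isUnit, Nat.cast_ofNat, ENNReal.one_sub_inv_two]
  · obtain ⟨k, rfl⟩ := Nat.exists_eq_add_of_le' hn
    simp only [Nat.add_sub_cancel]
    ring
  by_cases hy : IsUnit y
  · rw [Set.indicator_of_mem (by exact hy), ← measure_prod_setOf_pow_dvd_discr_sub μ hn ha x hy]
    congr 1
    ext r
    simp [S, hy]
  · rw [Set.indicator_of_notMem (by exact hy)]
    exact measure_eq_zero_iff_ae_notMem.mpr (Filter.Eventually.of_forall fun r hr => hy hr.1)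

theorem measure_setOf_discr_eq_two_pow_mul_of_dvd_sub {e j : ℕ} (hej : 2 ≤ e + j) (hj : j ≠ 0)
    {c : ℤ_[2]} (hc : IsUnit c) (hsq : ∃ t, 4 ∣ 2 ^ e * c - t ^ 2) :
    (μ.prod (μ.prod (μ.prod μ))) {q : ℤ_[2] × ℤ_[2] × ℤ_[2] × ℤ_[2] |
        IsUnit q.2.1 ∧ ∃ u, IsUnit u ∧
          (q.1 - q.2.2.2) ^ 2 + 4 * q.2.1 * q.2.2.1 = 2 ^ e * u ∧ 2 ^ j ∣ u - c} =
      2⁻¹ ^ (e + j) := by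
  rw [← measure_setOf_isUnit_and_pow_dvd_discr_sub μ hej hsq]
  congr 1
  ext q
  refine and_congr_right fun _ => ?_
  simpa using exists_isUnit_eq_pow_mul_and_pow_dvd_sub_iff (p := 2) hc hj e
    ((q.1 - q.2.2.2) ^ 2 + 4 * q.2.1 * q.2.2.1)

theorem measure_setOf_discr_eq_two_pow_mul {e : ℕ} (he : 2 ≤ e) :
    (μ.prod (μ.prod (μ.prod μ))) {q : ℤ_[2] × ℤ_[2] × ℤ_[2] × ℤ_[2] |
        IsUnit q.2.1 ∧ ∃ u, IsUnit u ∧ (q.1 - q.2.2.2) ^ 2 + 4 * q.2.1 * q.2.2.1 = 2 ^ e * u} =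
      2⁻¹ ^ (e + 1) := by
  have h4 : (4 : ℤ_[2]) ∣ 2 ^ e := by
    rw [show (4 : ℤ_[2]) = 2 ^ 2 by norm_num]
    exact pow_dvd_pow 2 he
  rw [← measure_setOf_discr_eq_two_pow_mul_of_dvd_sub μ (by omega) one_ne_zero isUnit_one
    ⟨0, by simpa using h4⟩]
  congr 1
  ext q
  refine and_congr_right fun _ => exists_congr fun u => and_congr_right fun hu => ?_
  rw [pow_one, ← isUnit_iff_two_dvd_sub_one, and_iff_left hu]

end PadicInt

theorem stmt3_general (m H : ℕ)
    (μ : Measure ℤ_[2]) [μ.IsAddHaarMeasure] [IsProbabilityMeasure μ] :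
    (∀ c : ℤ_[2], c = 1 ∨ c = 5 →
      (μ.prod (μ.prod (μ.prod μ))) {p : ℤ_[2] × ℤ_[2] × ℤ_[2] × ℤ_[2] |
          IsUnit p.2.1 ∧ ∃ u : ℤ_[2], IsUnit u ∧
            (p.1 - p.2.2.2) ^ 2 + 4 * p.2.1 * p.2.2.1 = 2 ^ (2 * (H - m)) * u ∧
            (8 : ℤ_[2]) ∣ u - c}
        = (1 / 2) * ((4 : ℝ≥0∞) ^ (H - m + 1))⁻¹) ∧
    (μ.prod (μ.prod (μ.prod μ))) {p : ℤ_[2] × ℤ_[2] × ℤ_[2] × ℤ_[2] |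
        IsUnit p.2.1 ∧ ∃ u : ℤ_[2], IsUnit u ∧
          (p.1 - p.2.2.2) ^ 2 + 4 * p.2.1 * p.2.2.1 = 2 ^ (2 * (H - m) + 2) * u ∧
          (4 : ℤ_[2]) ∣ u - 3}
      = (1 / 4) * ((4 : ℝ≥0∞) ^ (H - m + 1))⁻¹ ∧
    (μ.prod (μ.prod (μ.prod μ))) {p : ℤ_[2] × ℤ_[2] × ℤ_[2] × ℤ_[2] |
        IsUnit p.2.1 ∧ ∃ u : ℤ_[2], IsUnit u ∧
          (p.1 - p.2.2.2) ^ 2 + 4 * p.2.1 * p.2.2.1 = 2 ^ (2 * (H - m) + 3) * u}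
      = (1 / 4) * ((4 : ℝ≥0∞) ^ (H - m + 1))⁻¹ := by
  set k := H - m
  have hrhs : ∀ j, (2⁻¹ : ℝ≥0∞) ^ j * ((4 : ℝ≥0∞) ^ (k + 1))⁻¹ = 2⁻¹ ^ (2 * k + j + 2) :=
    fun j => by
      rw [ENNReal.inv_pow, show (4 : ℝ≥0∞) = 2 ^ 2 by norm_num, ENNReal.inv_pow, ← pow_mul,
        ← pow_add]
      ring_nf
  refine ⟨fun c hc => ?_, ?_, ?_⟩
  · have hc4 : (4 : ℤ_[2]) ∣ c - 1 := by rcases hc with rfl | rfl <;> norm_num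
    have hsq : ∃ t, (4 : ℤ_[2]) ∣ 2 ^ (2 * k) * c - t ^ 2 :=
      ⟨2 ^ k, by rw [← pow_mul, mul_comm k, ← mul_sub_one]; exact hc4.mul_left _⟩
    have h := PadicInt.measure_setOf_discr_eq_two_pow_mul_of_dvd_sub μ (e := 2 * k) (j := 3)
      (by omega) three_ne_zero ((PadicInt.isUnit_iff_two_dvd_sub_one c).mpr
        (dvd_trans ⟨2, by norm_num⟩ hc4)) hsq
    rw [show (1 / 2 : ℝ≥0∞) = 2⁻¹ ^ 1 by norm_num, hrhs]
    norm_num at h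
    exact h
  · have h := PadicInt.measure_setOf_discr_eq_two_pow_mul_of_dvd_sub μ (e := 2 * k + 2) (j := 2)
      (by omega) two_ne_zero ((PadicInt.isUnit_iff_two_dvd_sub_one 3).mpr ⟨1, by norm_num⟩)
      ⟨0, ⟨2 ^ (2 * k) * 3, by ring⟩⟩
    rw [show (1 / 4 : ℝ≥0∞) = 2⁻¹ ^ 2 by rw [one_div, ← ENNReal.inv_pow]; norm_num, hrhs]
    norm_num at h
    exact h
  · rw [show (1 / 4 : ℝ≥0∞) = 2⁻¹ ^ 2 by rw [one_div, ← ENNReal.inv_pow]; norm_num, hrhs]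
    exact PadicInt.measure_setOf_discr_eq_two_pow_mul μ (e := 2 * k + 3) (by omega)

/-- Theorem 6.1: let `m ≥ 2`, `H ≥ m`, and let `μ⁴` be the product Haar probability measure on
`ℤ_[2]⁴`, coordinates `(x, y, z, w)`, and `ξ = (x − w)² + 4yz`.  Then:
(1) for `c ∈ {1, 5}`, the measure of the event "`y` is a unit, `sqf(ξ) ≡ c (mod 8)` and
`H_M = H`" (i.e. `ξ = 2^{2(H−m)}·u` with `u` a unit, `u ≡ c (mod 8)`) is `(1/2)·4^{-(H−m+1)}`;
(2) the measure of the event "`y` is a unit, `sqf(ξ) ≡ 3 (mod 4)` and `H_M = H`"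
(i.e. `ξ = 2^{2(H−m)+2}·u` with `u` a unit, `u ≡ 3 (mod 4)`) is `(1/4)·4^{-(H−m+1)}`;
(3) the measure of the event "`y` is a unit, `sqf(ξ) ≡ 2 (mod 4)` and `H_M = H`"
(i.e. `ξ = 2^{2(H−m)+3}·u` with `u` a unit) is `(1/4)·4^{-(H−m+1)}`. -/
theorem stmt3 (m H : ℕ) (hm : 2 ≤ m) (hH : m ≤ H)
    (μ : Measure ℤ_[2]) [μ.IsAddHaarMeasure] [IsProbabilityMeasure μ] :
    (∀ c : ℤ_[2], c = 1 ∨ c = 5 →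
      (μ.prod (μ.prod (μ.prod μ))) {p : ℤ_[2] × ℤ_[2] × ℤ_[2] × ℤ_[2] |
          IsUnit p.2.1 ∧ ∃ u : ℤ_[2], IsUnit u ∧
            (p.1 - p.2.2.2) ^ 2 + 4 * p.2.1 * p.2.2.1 = 2 ^ (2 * (H - m)) * u ∧
            (8 : ℤ_[2]) ∣ u - c}
        = (1 / 2) * ((4 : ℝ≥0∞) ^ (H - m + 1))⁻¹) ∧
    (μ.prod (μ.prod (μ.prod μ))) {p : ℤ_[2] × ℤ_[2] × ℤ_[2] × ℤ_[2] |
        IsUnit p.2.1 ∧ ∃ u : ℤ_[2], IsUnit u ∧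
          (p.1 - p.2.2.2) ^ 2 + 4 * p.2.1 * p.2.2.1 = 2 ^ (2 * (H - m) + 2) * u ∧
          (4 : ℤ_[2]) ∣ u - 3}
      = (1 / 4) * ((4 : ℝ≥0∞) ^ (H - m + 1))⁻¹ ∧
    (μ.prod (μ.prod (μ.prod μ))) {p : ℤ_[2] × ℤ_[2] × ℤ_[2] × ℤ_[2] |
        IsUnit p.2.1 ∧ ∃ u : ℤ_[2], IsUnit u ∧
          (p.1 - p.2.2.2) ^ 2 + 4 * p.2.1 * p.2.2.1 = 2 ^ (2 * (H - m) + 3) * u}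
      = (1 / 4) * ((4 : ℝ≥0∞) ^ (H - m + 1))⁻¹ :=
  stmt3_general m H μ
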